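/- The Bell triangle X = [X_{n,k}] defined by X_{0,0}=1, X_{n+1,k} = X_{n,k-1} + (k+1) X_{n,k} + (k+1) X_{n,k+1} (with X_{n,k}=0 unless n ≥ k ≥ 0) is totally positive; in particular, all its minors of any order are nonnegative. -/

import Mathlib

/-- An infinite matrix is totally positive if all its minors are nonnegative. -/
def IsTotallyPos (M : ℕ → ℕ → ℝ) : Prop :=
  ∀ (m : ℕ) (f g : Fin m → ℕ), StrictMono f → StrictMono g →
    0 ≤ (Matrix.of fun i j => M (f i) (g j)).det

/-!
The recurrence says that each row of `X` is the previous one multiplied by a tridiagonal matrix,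
and this matrix factors into nonnegative bidiagonal matrices and a column shift. Such column
operations preserve nonnegativity of all maximal minors of a finite family of rows: by
multilinearity the new minor is a nonnegative combination of old minors with weakly increasing
column indices, each of which is either a genuine minor or vanishes. A minor of `X` that uses
row `0` reduces to a smaller minor, since row `0` is `e₀`; otherwise it is a maximal minor of the
rows one step earlier after these column operations.
-/

open Matrix Finset

variable {R : Type*} [CommRing R] [PartialOrder R] {m : ℕ}

def MaximalMinorsNonneg (A : Fin m → ℕ → R) : Prop :=
  ∀ g : Fin m → ℕ, StrictMono g → 0 ≤ (Matrix.of fun i j => A i (g j)).det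

def shiftCols (A : Fin m → ℕ → R) (i : Fin m) : ℕ → R
  | 0 => 0
  | k + 1 => A i k

namespace MaximalMinorsNonneg

variable {A : Fin m → ℕ → R}

theorem det_nonneg_of_monotone (hA : MaximalMinorsNonneg A) {g : Fin m → ℕ} (hg : Monotone g) :
    0 ≤ (Matrix.of fun i j => A i (g j)).det := by
  by_cases hinj : Function.Injective g
  · exact hA g (hg.strictMono_iff_injective.mpr hinj)
  · obtain ⟨j, k, hjk, hne⟩ := Function.not_injective_iff.mp hinj
    rw [det_zero_of_column_eq hne fun i => by simp [hjk]]

theorem mix [IsOrderedRing R] (hA : MaximalMinorsNonneg A) {u v : ℕ → R} (hu : ∀ k, 0 ≤ u k)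
    (hv : ∀ k, 0 ≤ v k) :
    MaximalMinorsNonneg fun i k => u k * A i k + v k * A i (k + 1) := by
  intro g hg
  have hcols : (Matrix.of fun i j => u (g j) * A i (g j) + v (g j) * A i (g j + 1))ᵀ =
      fun j => ∑ b : Fin 2, ![u (g j), v (g j)] b • fun i => A i (g j + b) := by
    ext j i; simp [Fin.sum_univ_two]
  rw [← det_transpose, hcols]
  change 0 ≤ detRowAlternating _
  rw [← AlternatingMap.coe_multilinearMap, MultilinearMap.map_sum]
  refine sum_nonneg fun r _ => ?_
  rw [MultilinearMap.map_smul_univ]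
  refine smul_nonneg (prod_nonneg fun j _ => ?_) ?_
  · have hcoeff : ∀ b : Fin 2, 0 ≤ ![u (g j), v (g j)] b := by
      simp [Fin.forall_fin_two, hu, hv]
    exact hcoeff (r j)
  · have hmono : Monotone fun j => g j + (r j : ℕ) := by
      intro j k hjk
      rcases hjk.lt_or_eq with hlt | rfl
      · have := hg hlt; have := (r j).isLt; dsimp only; omega
      · rfl
    have := hA.det_nonneg_of_monotone hmono
    rwa [← det_transpose] at this

theorem shiftCols (hA : MaximalMinorsNonneg A) : MaximalMinorsNonneg (shiftCols A) := by
  intro g hg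
  by_cases hzero : ∃ j, g j = 0
  · obtain ⟨j, hj⟩ := hzero
    rw [det_eq_zero_of_column_eq_zero j fun i => by simp [hj, _root_.shiftCols]]
  · simp only [not_exists] at hzero
    have hpred : StrictMono fun j => g j - 1 := fun j k hjk => by
      have := hg hjk; have := hzero j; dsimp only; omega
    have hcols : (of fun i j => _root_.shiftCols A i (g j)) = of fun i j => A i (g j - 1) := by
      ext i j
      obtain ⟨k, hk⟩ := Nat.exists_eq_succ_of_ne_zero (hzero j)
      simp [hk, _root_.shiftCols]
    exact hcols ▸ hA _ hpred

theorem of_tail [IsOrderedRing R] {A : Fin (m + 1) → ℕ → R}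
    (hA : MaximalMinorsNonneg (Fin.tail A)) {c : R} (hc : 0 ≤ c) (h0 : A 0 = Pi.single 0 c) :
    MaximalMinorsNonneg A := by
  intro g hg
  have hrow : ∀ j : Fin m, A 0 (g j.succ) = 0 := fun j => by
    have := hg (Fin.succ_pos j)
    rw [h0, Pi.single_apply, if_neg (by omega)]
  rw [det_succ_row_zero, Fin.sum_univ_succ, sum_eq_zero fun j _ => by simp [hrow],
    add_zero, Fin.succAbove_zero]
  have hcorner : 0 ≤ A 0 (g 0) := by
    rw [h0, Pi.single_apply]; split_ifs <;> simp [hc]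
  simp only [Fin.val_zero, pow_zero, one_mul, of_apply]
  exact mul_nonneg hcorner (hA _ (hg.comp Fin.strictMono_succ))

end MaximalMinorsNonneg

section Bell

variable {X : ℕ → ℕ → ℝ}

theorem maximalMinorsNonneg_rows_succ (hrec0 : ∀ n, X (n + 1) 0 = X n 0 + X n 1)
    (hrec : ∀ n k, X (n + 1) (k + 1)
      = X n k + ((k : ℝ) + 2) * X n (k + 1) + ((k : ℝ) + 2) * X n (k + 2))
    {m : ℕ} {f : Fin m → ℕ} (hf : MaximalMinorsNonneg fun i => X (f i)) :
    MaximalMinorsNonneg fun i => X (f i + 1) := by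
  -- `X (n + 1) k = P n (k - 1) + P n k` with `P n k = X n k + (k + 1) * X n (k + 1)`
  have hP := hf.mix (u := 1) (v := fun k => (k : ℝ) + 1) (fun _ => zero_le_one)
    (fun _ => by positivity)
  have h := hP.shiftCols.mix (u := 1) (v := 1) (fun _ => zero_le_one) (fun _ => zero_le_one)
  convert h using 1
  funext i k
  cases k with
  | zero => simp [shiftCols, hrec0]
  | succ k =>
    simp only [hrec, Pi.one_apply, shiftCols, one_mul, Nat.cast_add, Nat.cast_one]
    ring

theorem maximalMinorsNonneg_rows (hX0 : X 0 0 = 1) (hzero : ∀ n k, n < k → X n k = 0)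
    (hrec0 : ∀ n, X (n + 1) 0 = X n 0 + X n 1)
    (hrec : ∀ n k, X (n + 1) (k + 1)
      = X n k + ((k : ℝ) + 2) * X n (k + 1) + ((k : ℝ) + 2) * X n (k + 2))
    {m : ℕ} (f : Fin m → ℕ) (hf : StrictMono f) : MaximalMinorsNonneg fun i => X (f i) := by
  induction m with
  | zero => intro g _; simp
  | succ m ihm =>
    have hrow0 : X 0 = Pi.single 0 1 := by
      ext k
      cases k with
      | zero => simp [hX0]
      | succ k => simp [hzero 0 (k + 1) k.succ_pos]
    suffices ∀ d (f : Fin (m + 1) → ℕ), StrictMono f → f 0 = d →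
        MaximalMinorsNonneg fun i => X (f i) from this _ f hf rfl
    intro d
    induction d with
    | zero =>
      intro f hf hf0
      exact .of_tail (ihm _ (hf.comp Fin.strictMono_succ)) zero_le_one (by simp only [hf0, hrow0])
    | succ d ihd =>
      intro f hf hf0
      have hpos : ∀ i, f 0 ≤ f i := fun i => hf.monotone (Fin.zero_le i)
      have hpred : StrictMono fun i => f i - 1 := fun i j hij => by
        have := hf hij; have := hpos i; dsimp only; omega
      have := maximalMinorsNonneg_rows_succ hrec0 hrec (ihd _ hpred (by omega))
      convert this using 4 with i
      have := hpos i; omega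

end Bell

/-- The Bell triangle, given by $X_{n+1,k} = X_{n,k-1} + (k+1) X_{n,k} + (k+1) X_{n,k+1}$,
is totally positive. -/
theorem bell_triangle_tp (X : ℕ → ℕ → ℝ)
    (hX0 : X 0 0 = 1) (hzero : ∀ n k, n < k → X n k = 0)
    (hrec0 : ∀ n, X (n + 1) 0 = X n 0 + X n 1)
    (hrec : ∀ n k, X (n + 1) (k + 1)
      = X n k + ((k : ℝ) + 2) * X n (k + 1) + ((k : ℝ) + 2) * X n (k + 2)) :
    IsTotallyPos X := by
  intro m f g hf hg
  exact maximalMinorsNonneg_rows hX0 hzero hrec0 hrec f hf g hg
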